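/- Fix integers d > k ≥ 1. For all positive integers m_1,…,m_{d−1}, the number of (d,k)-NATs whose root label is (m_1,…,m_{d−1},1) equals the number of (d−1,k)-NATs whose root label is (m_1,…,m_{d−1}). -/

import Mathlib

/-!
Every non-root vertex carrying an `i`-th entry is a strict descendant of the root, so that
entry is a positive integer smaller than the root's `i`-th entry. Hence if the root has entry `1`
in every coordinate outside the image of an embedding `e : Fin d' ↪ Fin d`, all non-root
directions lie in that image, and deleting the other coordinates is a bijection onto the
`(d',k)`-NATs; its inverse re-embeds the directions and gives the root the entry `1` in the new
coordinates. The theorem is the case `e = Fin.castLEEmb`.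
-/

/-- A `(d,k)`-direction: a `k`-element subset of the `d` coordinates. -/
abbrev Dir (d k : ℕ) := {π : Finset (Fin d) // π.card = k}

/-- A `(d,k)`-ary tree: every vertex has at most one child for each `(d,k)`-direction. -/
inductive KTree (d k : ℕ) : Type where
  | node : (Dir d k → Option (KTree d k)) → KTree d k

namespace KTree

variable {d k : ℕ}

/-- The subtree of a `(d,k)`-ary tree at a given position (path of directions),
if the position exists in the tree. -/
def subtreeAt : KTree d k → List (Dir d k) → Option (KTree d k)
  | t, [] => some t
  | .node c, π :: p =>
    match c π with
    | some t => subtreeAt t p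
    | none => none

/-- `p` is (the position of) a vertex of `M`. -/
def isVertex (M : KTree d k) (p : List (Dir d k)) : Prop := (M.subtreeAt p).isSome

end KTree

/-- The direction of the vertex at position `p`: the direction indexing it as a child of its
parent; the root (empty position) has direction `{1,…,d}`. -/
def dirOf {d k : ℕ} (p : List (Dir d k)) : Finset (Fin d) :=
  (p.getLast?).elim Finset.univ Subtype.val

/-- A non-ambiguous tree of dimension `(d,k)` of shape `M`: each vertex of direction `π`
carries a tuple of positive integers indexed by `π` (the root carrying a full `d`-tuple),
encoded as a function `lbl` which vanishes at the unused positions; entries strictly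
decrease from ancestors to descendants, and for each coordinate `i` the `i`-th entries are
pairwise distinct and form an integer interval with minimum `1`. -/
structure KNAT (d k : ℕ) (M : KTree d k) where
  lbl : List (Dir d k) → Fin d → ℕ
  supp : ∀ p i, ¬(M.isVertex p ∧ i ∈ dirOf p) → lbl p i = 0
  anc : ∀ p q, M.isVertex p → M.isVertex q → p <+: q → p ≠ q →
    ∀ i, i ∈ dirOf p → i ∈ dirOf q → lbl q i < lbl p i
  inj : ∀ i : Fin d, Set.InjOn (fun p => lbl p i) {p | M.isVertex p ∧ i ∈ dirOf p}
  interval : ∀ i : Fin d,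
    (fun p => lbl p i) '' {p | M.isVertex p ∧ i ∈ dirOf p} =
      Set.Icc 1 (Set.ncard {p | M.isVertex p ∧ i ∈ dirOf p})

open Function Set

lemma List.mapM_eq_some_iff_of_isPartialInv {α β : Type*} {f : α → β} {g : β → Option α}
    (hg : IsPartialInv f g) {l : List β} {l' : List α} :
    l.mapM g = some l' ↔ l'.map f = l := by
  induction l generalizing l' with
  | nil => cases l' <;> simp
  | cons b l ih =>
    cases l' with
    | nil => rcases hb : g b with _ | a <;> rcases hl : l.mapM g with _ | l' <;> simp [hb, hl]
    | cons a l' =>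
      rw [List.map_cons, List.cons_eq_cons, ← ih, ← hg]
      rcases hb : g b with _ | a' <;> rcases hl : l.mapM g with _ | l'' <;> simp [hb, hl]

section

variable {d d' k : ℕ} (e : Fin d' ↪ Fin d)

namespace Dir

def embed (π : Dir d' k) : Dir d k := ⟨π.1.map e, by simp [π.2]⟩

lemma embed_injective : Injective (embed (k := k) e) := fun _ _ h =>
  Subtype.ext (Finset.map_injective e (congrArg Subtype.val h))

lemma mem_range_embed_iff {π : Dir d k} :
    π ∈ range (embed e) ↔ ∀ i ∈ π.1, i ∈ range e := by
  constructor
  · rintro ⟨σ, rfl⟩ i hi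
    obtain ⟨j, -, rfl⟩ := Finset.mem_map.1 hi
    exact mem_range_self j
  · intro h
    obtain ⟨σ, -, hσ⟩ := Finset.subset_map_iff.1 fun i hi => by
      obtain ⟨j, rfl⟩ := h i hi
      exact Finset.mem_map_of_mem e (Finset.mem_univ j)
    exact ⟨⟨σ, by rw [← π.2, hσ, Finset.card_map]⟩, Subtype.ext hσ.symm⟩

end Dir

@[simp]
lemma dirOf_nil : dirOf ([] : List (Dir d k)) = Finset.univ := rfl

lemma dirOf_map_embed {p : List (Dir d' k)} (hp : p ≠ []) :
    dirOf (p.map (Dir.embed e)) = (dirOf p).map e := by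
  simp [dirOf, List.getLast?_map, List.getLast?_eq_some_getLast hp, Dir.embed]

@[simp]
lemma apply_mem_dirOf_map_embed {p : List (Dir d' k)} {j : Fin d'} :
    e j ∈ dirOf (p.map (Dir.embed e)) ↔ j ∈ dirOf p := by
  rcases eq_or_ne p [] with rfl | hp
  · simp
  · simp [dirOf_map_embed e hp]

lemma mem_range_of_mem_dirOf_map_embed {p : List (Dir d' k)} (hp : p ≠ []) {i : Fin d}
    (hi : i ∈ dirOf (p.map (Dir.embed e))) : i ∈ range e := by
  rw [dirOf_map_embed e hp, Finset.mem_map] at hi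
  obtain ⟨j, -, rfl⟩ := hi
  exact mem_range_self j

namespace KTree

lemma ind {P : KTree d k → Prop} (node : ∀ c, (∀ π t, c π = some t → P t) → P (node c))
    (t : KTree d k) : P t := by
  induction t using KTree.rec (motive_2 := fun o => ∀ t, o = some t → P t) with
  | node c ih => exact node c fun π t ht => ih π t ht
  | none => cases ‹none = some _›
  | some v hv => cases ‹some v = some _›; exact hv

@[simp]
lemma isVertex_nil (t : KTree d k) : t.isVertex [] := by
  cases t; simp [isVertex, subtreeAt]

@[simp]
lemma isVertex_node_cons {c : Dir d k → Option (KTree d k)} {π : Dir d k} {p : List (Dir d k)} :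
    (node c).isVertex (π :: p) ↔ ∃ t, c π = some t ∧ t.isVertex p := by
  unfold isVertex
  rw [subtreeAt]
  cases c π <;> simp

lemma isVertex_of_prefix {t : KTree d k} {p q : List (Dir d k)} (hpq : p <+: q)
    (hq : t.isVertex q) : t.isVertex p := by
  induction p generalizing q t with
  | nil => exact isVertex_nil t
  | cons π p ih =>
    obtain ⟨σ, q, rfl⟩ := List.exists_cons_of_ne_nil (List.IsPrefix.ne_nil hpq (by simp))
    obtain ⟨rfl, hpq'⟩ := List.cons_prefix_cons.1 hpq
    obtain ⟨c⟩ := t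
    obtain ⟨t, hc, hq⟩ := isVertex_node_cons.1 hq
    exact isVertex_node_cons.2 ⟨t, hc, ih hpq' hq⟩

lemma ext_isVertex {s t : KTree d k} (h : ∀ p, s.isVertex p ↔ t.isVertex p) : s = t := by
  induction s using KTree.ind generalizing t with
  | node c ih =>
    obtain ⟨c'⟩ := t
    congr 1
    funext π
    have hπ := fun p => h (π :: p)
    simp only [isVertex_node_cons] at hπ
    cases hc : c π <;> cases hc' : c' π <;> simp only [hc, hc'] at hπ
    · rfl
    · simpa using hπ []
    · simpa using hπ []
    · exact congrArg some (ih π _ hc fun p => by simpa using hπ p)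

noncomputable def pullback (g : Dir d' k → Option (Dir d k)) : KTree d k → KTree d' k :=
  KTree.rec (motive_1 := fun _ => KTree d' k) (motive_2 := fun _ => Option (KTree d' k))
    (fun _ r => node fun π => (g π).bind r) none (fun _ => some)

lemma pullback_node (g : Dir d' k → Option (Dir d k)) (c : Dir d k → Option (KTree d k)) :
    pullback g (node c) = node fun π => (g π).bind fun σ => (c σ).map (pullback g) := by
  show node _ = _
  congr 1
  funext π
  congr 1
  funext σ
  cases c σ <;> rfl

lemma isVertex_pullback (g : Dir d' k → Option (Dir d k)) (t : KTree d k) (p : List (Dir d' k)) :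
    (pullback g t).isVertex p ↔ ∃ q, p.mapM g = some q ∧ t.isVertex q := by
  induction p generalizing t with
  | nil => simp
  | cons π p ih =>
    obtain ⟨c⟩ := t
    rw [pullback_node, isVertex_node_cons, List.mapM_cons]
    rcases hπ : g π with _ | σ
    · simp
    rcases hc : c σ with _ | t <;> simp [hc, ih, Option.bind_eq_some_iff]

noncomputable def restrict : KTree d k → KTree d' k := pullback (some ∘ Dir.embed e)

noncomputable def lift : KTree d' k → KTree d k := pullback (partialInv (Dir.embed e))

lemma isVertex_restrict {t : KTree d k} {p : List (Dir d' k)} :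
    (restrict e t).isVertex p ↔ t.isVertex (p.map (Dir.embed e)) := by
  have : p.mapM (some ∘ Dir.embed e) = some (p.map (Dir.embed e)) := List.mapM_pure
  simp [restrict, isVertex_pullback, this]

lemma isVertex_lift {t : KTree d' k} {q : List (Dir d k)} :
    (lift e t).isVertex q ↔ ∃ p, t.isVertex p ∧ p.map (Dir.embed e) = q := by
  simp only [lift, isVertex_pullback,
    List.mapM_eq_some_iff_of_isPartialInv (Dir.embed_injective e).isPartialInv]
  exact exists_congr fun p => and_comm

lemma restrict_lift (t : KTree d' k) : restrict e (lift e t) = t :=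
  ext_isVertex fun p => by
    simp [isVertex_restrict, isVertex_lift,
      (List.map_injective_iff.2 (Dir.embed_injective e)).eq_iff]

lemma lift_restrict {t : KTree d k}
    (ht : ∀ q, t.isVertex q → q ∈ range (List.map (Dir.embed e))) :
    lift e (restrict e t) = t :=
  ext_isVertex fun q => by
    rw [isVertex_lift]
    constructor
    · rintro ⟨p, hp, rfl⟩
      exact isVertex_restrict e |>.1 hp
    · intro hq
      obtain ⟨p, rfl⟩ := ht q hq
      exact ⟨p, isVertex_restrict e |>.2 hq, rfl⟩

def carriers (t : KTree d k) (i : Fin d) : Set (List (Dir d k)) :=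
  {p | t.isVertex p ∧ i ∈ dirOf p}

lemma carriers_lift_apply (t : KTree d' k) (j : Fin d') :
    (lift e t).carriers (e j) = List.map (Dir.embed e) '' t.carriers j := by
  ext q
  simp only [carriers, isVertex_lift, mem_image]
  constructor
  · rintro ⟨⟨p, hp, rfl⟩, hj⟩
    exact ⟨p, ⟨hp, (apply_mem_dirOf_map_embed e).1 hj⟩, rfl⟩
  · rintro ⟨p, ⟨hp, hj⟩, rfl⟩
    exact ⟨⟨p, hp, rfl⟩, (apply_mem_dirOf_map_embed e).2 hj⟩

lemma carriers_lift_of_notMem_range (t : KTree d' k) {i : Fin d} (hi : i ∉ range e) :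
    (lift e t).carriers i = {[]} := by
  ext q
  simp only [carriers, isVertex_lift, mem_singleton_iff]
  constructor
  · rintro ⟨⟨p, -, rfl⟩, hpi⟩
    by_contra hq
    exact hi (mem_range_of_mem_dirOf_map_embed e (by simpa using hq) hpi)
  · rintro rfl
    exact ⟨⟨[], isVertex_nil t, rfl⟩, Finset.mem_univ i⟩

lemma carriers_apply_eq_image {t : KTree d k}
    (ht : ∀ q, t.isVertex q → q ∈ range (List.map (Dir.embed e))) (j : Fin d') :
    t.carriers (e j) = List.map (Dir.embed e) '' (restrict e t).carriers j := by
  conv_lhs => rw [← lift_restrict e ht]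
  exact carriers_lift_apply e _ j

end KTree

namespace KNAT

section

variable {M : KTree d k}

lemma ext {N N' : KNAT d k M} (h : N.lbl = N'.lbl) : N = N' := by
  cases N; cases N'; cases h; rfl

lemma sigma_ext {M M' : KTree d k} (hM : M = M') {N : KNAT d k M} {N' : KNAT d k M'}
    (hN : N.lbl = N'.lbl) : (⟨M, N⟩ : Σ M, KNAT d k M) = ⟨M', N'⟩ := by
  subst hM
  rw [ext hN]

lemma image_lbl_carriers (N : KNAT d k M) (i : Fin d) :
    (fun p => N.lbl p i) '' M.carriers i = Icc 1 (M.carriers i).ncard :=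
  N.interval i

lemma one_le_lbl (N : KNAT d k M) {p : List (Dir d k)} {i : Fin d} (hp : p ∈ M.carriers i) :
    1 ≤ N.lbl p i :=
  (N.image_lbl_carriers i ▸ mem_image_of_mem (fun p => N.lbl p i) hp).1

lemma notMem_dirOf_of_lbl_nil_eq_one (N : KNAT d k M) {i : Fin d} (h : N.lbl [] i = 1)
    {p : List (Dir d k)} (hp : M.isVertex p) (hne : p ≠ []) : i ∉ dirOf p := fun hi =>
  have := N.anc [] p (M.isVertex_nil) hp List.nil_prefix hne.symm i (Finset.mem_univ i) hi
  (N.one_le_lbl ⟨hp, hi⟩).not_gt (h ▸ this)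

lemma mem_range_map_embed_of_isVertex (N : KNAT d k M) (h : ∀ i ∉ range e, N.lbl [] i = 1)
    {q : List (Dir d k)} (hq : M.isVertex q) : q ∈ range (List.map (Dir.embed e)) := by
  rw [range_list_map]
  intro π hπ
  obtain ⟨a, b, rfl⟩ := List.append_of_mem hπ
  have hv : M.isVertex (a ++ [π]) := KTree.isVertex_of_prefix ⟨b, by simp⟩ hq
  rw [Dir.mem_range_embed_iff]
  intro i hi
  by_contra hie
  refine N.notMem_dirOf_of_lbl_nil_eq_one (h i hie) hv (by simp) ?_
  simpa [dirOf] using hi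

lemma lbl_nil_eq_one_of_eq_extend (N : KNAT d k M) {m : Fin d' → ℕ}
    (h : ∀ i, N.lbl [] i = extend e m (fun _ => 1) i) : ∀ i ∉ range e, N.lbl [] i = 1 :=
  fun i hi => (h i).trans (extend_apply' _ _ _ hi)

end

section

variable (ℓ : List (Dir d' k) → Fin d' → ℕ)

noncomputable def liftLbl (q : List (Dir d k)) (i : Fin d) : ℕ :=
  extend (Prod.map (List.map (Dir.embed e)) e) (uncurry ℓ)
    (fun x => if x.1 = [] then 1 else 0) (q, i)

lemma liftLbl_map_embed (p : List (Dir d' k)) (j : Fin d') :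
    liftLbl e ℓ (p.map (Dir.embed e)) (e j) = ℓ p j :=
  ((List.map_injective_iff.2 (Dir.embed_injective e)).prodMap e.injective).extend_apply _ _ (p, j)

lemma liftLbl_of_notMem_range {q : List (Dir d k)} {i : Fin d}
    (h : ¬∃ (p : List (Dir d' k)) (j : Fin d'), p.map (Dir.embed e) = q ∧ e j = i) :
    liftLbl e ℓ q i = if q = [] then 1 else 0 :=
  extend_apply' _ _ _ fun ⟨⟨p, j⟩, hpj⟩ => h ⟨p, j, Prod.ext_iff.1 hpj⟩

end

noncomputable def lift {M : KTree d' k} (N : KNAT d' k M) : KNAT d k (M.lift e) where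
  lbl := liftLbl e N.lbl
  supp q i h := by
    by_cases hqi : ∃ (p : List (Dir d' k)) (j : Fin d'), p.map (Dir.embed e) = q ∧ e j = i
    · obtain ⟨p, j, rfl, rfl⟩ := hqi
      rw [liftLbl_map_embed]
      exact N.supp p j fun ⟨hp, hj⟩ =>
        h ⟨(KTree.isVertex_lift e).2 ⟨p, hp, rfl⟩, (apply_mem_dirOf_map_embed e).2 hj⟩
    · rw [liftLbl_of_notMem_range e _ hqi, if_neg]
      rintro rfl
      exact h ⟨KTree.isVertex_nil _, Finset.mem_univ i⟩
  anc p q hp hq hpq hne i hip hiq := by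
    obtain ⟨p, hp', rfl⟩ := (KTree.isVertex_lift e).1 hp
    obtain ⟨q, hq', rfl⟩ := (KTree.isVertex_lift e).1 hq
    have hq_ne : q ≠ [] := by
      rintro rfl
      exact hne (List.prefix_nil.1 (by simpa using hpq))
    obtain ⟨j, rfl⟩ := mem_range_of_mem_dirOf_map_embed e hq_ne hiq
    rw [liftLbl_map_embed, liftLbl_map_embed]
    exact N.anc p q hp' hq' ((List.prefix_map_iff_of_injective (Dir.embed_injective e)).1 hpq)
      (by rintro rfl; exact hne rfl) j ((apply_mem_dirOf_map_embed e).1 hip)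
      ((apply_mem_dirOf_map_embed e).1 hiq)
  inj i := by
    show InjOn _ ((M.lift e).carriers i)
    by_cases hi : i ∈ range e
    · obtain ⟨j, rfl⟩ := hi
      rw [KTree.carriers_lift_apply]
      rintro _ ⟨p₁, hp₁, rfl⟩ _ ⟨p₂, hp₂, rfl⟩ h
      simp only [liftLbl_map_embed] at h
      rw [N.inj j hp₁ hp₂ h]
    · rw [KTree.carriers_lift_of_notMem_range e M hi]
      exact injOn_singleton _ _
  interval i := by
    show _ '' (M.lift e).carriers i = Icc 1 ((M.lift e).carriers i).ncard
    by_cases hi : i ∈ range e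
    · obtain ⟨j, rfl⟩ := hi
      rw [KTree.carriers_lift_apply, ← image_comp,
        ncard_image_of_injective _ (List.map_injective_iff.2 (Dir.embed_injective e))]
      simpa only [Function.comp_def, liftLbl_map_embed] using N.image_lbl_carriers j
    · rw [KTree.carriers_lift_of_notMem_range e M hi, image_singleton, ncard_singleton, Icc_self,
        liftLbl_of_notMem_range e _ (by rintro ⟨p, j, -, rfl⟩; exact hi (mem_range_self j)),
        if_pos rfl]

section

variable {M : KTree d k}

noncomputable def restrict (N : KNAT d k M) (h : ∀ i ∉ range e, N.lbl [] i = 1) :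
    KNAT d' k (M.restrict e) where
  lbl p j := N.lbl (p.map (Dir.embed e)) (e j)
  supp p j hpj := N.supp _ _ fun ⟨hp, hj⟩ =>
    hpj ⟨(KTree.isVertex_restrict e).2 hp, (apply_mem_dirOf_map_embed e).1 hj⟩
  anc p q hp hq hpq hne j hjp hjq :=
    N.anc _ _ ((KTree.isVertex_restrict e).1 hp) ((KTree.isVertex_restrict e).1 hq)
      (hpq.map _) (fun hpq' => hne (List.map_injective_iff.2 (Dir.embed_injective e) hpq')) (e j)
      ((apply_mem_dirOf_map_embed e).2 hjp) ((apply_mem_dirOf_map_embed e).2 hjq)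
  inj j := by
    refine (N.inj (e j)).comp (List.map_injective_iff.2 (Dir.embed_injective e)).injOn ?_
    show MapsTo _ _ (M.carriers (e j))
    rw [KTree.carriers_apply_eq_image e fun _ => N.mem_range_map_embed_of_isVertex e h]
    exact mapsTo_image _ _
  interval j := by
    have := N.image_lbl_carriers (e j)
    rw [KTree.carriers_apply_eq_image e fun _ => N.mem_range_map_embed_of_isVertex e h,
      ← image_comp,
      ncard_image_of_injective _ (List.map_injective_iff.2 (Dir.embed_injective e))] at this
    exact this

lemma liftLbl_lbl_restrict (N : KNAT d k M) (h : ∀ i ∉ range e, N.lbl [] i = 1) :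
    liftLbl e (N.restrict e h).lbl = N.lbl := by
  funext q i
  by_cases hqi : ∃ (p : List (Dir d' k)) (j : Fin d'), p.map (Dir.embed e) = q ∧ e j = i
  · obtain ⟨p, j, rfl, rfl⟩ := hqi
    exact liftLbl_map_embed e _ p j
  rw [liftLbl_of_notMem_range e _ hqi]
  split_ifs with hq
  · subst hq
    exact (h i fun ⟨j, hj⟩ => hqi ⟨[], j, rfl, hj⟩).symm
  · refine (N.supp q i fun ⟨hv, hi⟩ => ?_).symm
    obtain ⟨p, rfl⟩ := N.mem_range_map_embed_of_isVertex e h hv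
    obtain ⟨j, rfl⟩ := mem_range_of_mem_dirOf_map_embed e (by simpa using hq) hi
    exact hqi ⟨p, j, rfl, rfl⟩

end

noncomputable def restrictEquiv (m : Fin d' → ℕ) :
    {N : Σ M : KTree d k, KNAT d k M // ∀ i, N.2.lbl [] i = extend e m (fun _ => 1) i} ≃
      {N : Σ M : KTree d' k, KNAT d' k M // ∀ j, N.2.lbl [] j = m j} where
  toFun N := ⟨⟨_, N.1.2.restrict e (N.1.2.lbl_nil_eq_one_of_eq_extend e N.2)⟩, fun j => by
    simp [KNAT.restrict, N.2 (e j), e.injective.extend_apply]⟩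
  invFun N := ⟨⟨_, N.1.2.lift e⟩, fun i => by
    by_cases hi : i ∈ range e
    · obtain ⟨j, rfl⟩ := hi
      rw [e.injective.extend_apply, ← N.2 j]
      exact liftLbl_map_embed e _ [] j
    · rw [extend_apply' _ _ _ hi]
      exact (liftLbl_of_notMem_range e _ fun ⟨_, j, _, hj⟩ => hi ⟨j, hj⟩).trans
        (if_pos rfl)⟩
  left_inv N :=
    have h := N.1.2.lbl_nil_eq_one_of_eq_extend e N.2
    Subtype.ext <| sigma_ext
      (KTree.lift_restrict e fun _ => N.1.2.mem_range_map_embed_of_isVertex e h)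
      (liftLbl_lbl_restrict e N.1.2 h)
  right_inv N := Subtype.ext (sigma_ext (KTree.restrict_lift e N.1.1)
    (funext₂ (liftLbl_map_embed e N.1.2.lbl)))

end KNAT

end

theorem knat_card_last_coord_one_general (d k : ℕ) (m : Fin (d - 1) → ℕ) :
    Nat.card {N : Σ M : KTree d k, KNAT d k M //
        ∀ i : Fin d, N.2.lbl [] i = if h : (i : ℕ) < d - 1 then m ⟨i, h⟩ else 1} =
      Nat.card {N : Σ M : KTree (d - 1) k, KNAT (d - 1) k M //
        ∀ i : Fin (d - 1), N.2.lbl [] i = m i} := by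
  set e := Fin.castLEEmb (Nat.sub_le d 1)
  have root_eq (i : Fin d) :
      (if h : (i : ℕ) < d - 1 then m ⟨i, h⟩ else 1) = extend e m (fun _ => 1) i := by
    split_ifs with h
    · exact (e.injective.extend_apply m _ ⟨i, h⟩).symm
    · exact (extend_apply' (f := e) m (fun _ => 1) i (by rintro ⟨j, rfl⟩; exact h j.isLt)).symm
  exact Nat.card_congr <|
    (Equiv.subtypeEquivRight fun N => forall_congr' fun i => by rw [root_eq]).trans
      (KNAT.restrictEquiv e m)

/-- For `d > k ≥ 1` and positive integers `m_1,…,m_{d−1}`, the number of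
`(d,k)`-NATs with root label `(m_1,…,m_{d−1},1)` equals the number of `(d−1,k)`-NATs with
root label `(m_1,…,m_{d−1})`. -/
theorem knat_card_last_coord_one (d k : ℕ) (hk : 1 ≤ k) (hkd : k < d)
    (m : Fin (d - 1) → ℕ) (hm : ∀ i, 1 ≤ m i) :
    Nat.card {N : Σ M : KTree d k, KNAT d k M //
        ∀ i : Fin d, N.2.lbl [] i = if h : (i : ℕ) < d - 1 then m ⟨i, h⟩ else 1} =
      Nat.card {N : Σ M : KTree (d - 1) k, KNAT (d - 1) k M //
        ∀ i : Fin (d - 1), N.2.lbl [] i = m i} :=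
  knat_card_last_coord_one_general d k m
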